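/- arXiv:2512.08835 — 2 statements merged into one kernel-verified Lean document; each statement's English description precedes it below -/
import Mathlib

section
/- Let E be a semilattice and (X,E,p) a presheaf over E. Then the generalised Munn semigroup T_X, with product given by composing the restrictions of its elements to intersections of principal subpresheaves, is an inverse semigroup: for all e,f ∈ E one has X·e ∩ X·f = X·ef, the inverse of (α,θ) ∈ T_X is (α⁻¹,θ⁻¹), and the idempotents of T_X are exactly the pairs (id_{X·e}, id_{e↓}) for e ∈ E. -/
/-- A meet-semilattice: a commutative semigroup all of whose elements are idempotent. -/
class MeetSL (E : Type*) extends CommSemigroup E where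
  idem : ∀ e : E, e * e = e

/-- The natural partial order on a meet-semilattice: `e ≤ f` iff `e = ef`. -/
def sle {E : Type*} [MeetSL E] (e f : E) : Prop := e = e * f

/-- The principal order-ideal `e↓ = {h ∈ E : h ≤ e}` of a meet-semilattice. -/
abbrev dOn (E : Type*) [MeetSL E] (e : E) : Type _ := {h : E // sle h e}

/-- A presheaf of sets over a meet-semilattice `E`, viewed as a supported action
`(X, E, p)` of `E` on `X`. -/
structure SPresheaf (X : Type*) (E : Type*) [MeetSL E] where
  act : X → E → X
  p : X → E
  act_act : ∀ x e f, act (act x e) f = act x (e * f)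
  act_p : ∀ x, act x (p x) = x
  p_act : ∀ x e, p (act x e) = p x * e

namespace SPresheaf
variable {X E : Type*} [MeetSL E]

/-- The natural partial order on a presheaf: `x ≤ y` iff `x = y · p(x)`. -/
def xle (P : SPresheaf X E) (x y : X) : Prop := x = P.act y (P.p x)

/-- The underlying set `X · e = {x ∈ X : p(x) ≤ e}` of the principal subpresheaf at `e`. -/
abbrev sub (P : SPresheaf X E) (e : E) : Type _ := {x : X // sle (P.p x) e}

end SPresheaf

/-- An element of the generalised Munn semigroup `T_X` of the presheaf `P`: an isomorphism
`(α, θ)` between the principal subpresheaves `(X·e, e↓)` and `(X·f, f↓)`, i.e. a pair of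
order-isomorphisms with `p(α(x)) = θ(p(x))` for all `x ∈ X·e`. -/
structure MunnElt {X E : Type*} [MeetSL E] (P : SPresheaf X E) where
  e : E
  f : E
  α : P.sub e ≃ P.sub f
  θ : dOn E e ≃ dOn E f
  α_ord : ∀ x y : P.sub e, P.xle x.1 y.1 ↔ P.xle (α x).1 (α y).1
  θ_ord : ∀ a b : dOn E e, sle a.1 b.1 ↔ sle (θ a).1 (θ b).1
  compat : ∀ x : P.sub e, P.p (α x).1 = (θ ⟨P.p x.1, x.2⟩).1

namespace MunnElt
variable {X E : Type*} [MeetSL E] {P : SPresheaf X E}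

/-- The partial-bijection graph of the first component of a Munn element. -/
def maps (t : MunnElt P) (x y : X) : Prop :=
  ∃ h : sle (P.p x) t.e, (t.α ⟨x, h⟩).1 = y

/-- The partial-bijection graph of the second component of a Munn element. -/
def mapsE (t : MunnElt P) (a b : E) : Prop :=
  ∃ h : sle a t.e, (t.θ ⟨a, h⟩).1 = b

end MunnElt

/-- `mul` is the multiplication of the generalised Munn semigroup `T_X`: the product
`mul a b` is obtained by restricting `a` and `b` to the intersection of the relevant
principal subpresheaves and composing (apply `b` first, then `a`). -/
def IsMunnMul {X E : Type*} [MeetSL E] {P : SPresheaf X E}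
    (mul : MunnElt P → MunnElt P → MunnElt P) : Prop :=
  ∀ a b : MunnElt P,
    (∀ x z : X, (mul a b).maps x z ↔ ∃ y, b.maps x y ∧ a.maps y z) ∧
    (∀ h k : E, (mul a b).mapsE h k ↔ ∃ m, b.mapsE h m ∧ a.mapsE m k)

/-- `inv` sends each `(α, θ)` of the generalised Munn semigroup to `(α⁻¹, θ⁻¹)`. -/
def IsMunnInv {X E : Type*} [MeetSL E] {P : SPresheaf X E}
    (inv : MunnElt P → MunnElt P) : Prop :=
  ∀ t : MunnElt P,
    (∀ x y : X, (inv t).maps x y ↔ t.maps y x) ∧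
    (∀ a b : E, (inv t).mapsE a b ↔ t.mapsE b a)

/-!
An element of `T_X` is determined by the graphs of its two partial bijections, and on graphs the
product of `T_X` is relational composition and the inverse is the converse relation. The
inverse-semigroup laws thus become identities between bi-unique relations: `r ∘ r⁻¹ ∘ r = r`;
`r ∘ s ∘ r = r` together with `s ∘ r ∘ s = s` forces `s = r⁻¹`; and `r ∘ r = r` forces `r` to lie
in the diagonal.
-/

local infixr:80 " ∘r " => Relation.Comp

section Semilattice
variable {E : Type*} [MeetSL E]

theorem sle_refl (e : E) : sle e e := (MeetSL.idem e).symm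

theorem sle_trans {a b c : E} (hab : sle a b) (hbc : sle b c) : sle a c := by
  change a = a * c
  rw [hab, mul_assoc, ← hbc]

theorem sle_antisymm {a b : E} (hab : sle a b) (hba : sle b a) : a = b := by
  rw [hab, mul_comm a b, ← hba]

theorem sle_mul_iff {a b c : E} : sle c (a * b) ↔ sle c a ∧ sle c b := by
  refine ⟨fun h => ⟨?_, ?_⟩, fun ⟨ha, hb⟩ => ?_⟩
  · change c = c * a
    rw [h, mul_assoc, mul_assoc, mul_comm b a, ← mul_assoc a, MeetSL.idem]
  · change c = c * b
    rw [h, mul_assoc, mul_assoc, MeetSL.idem]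
  · change c = c * (a * b)
    rw [← mul_assoc, ← ha, ← hb]

theorem eq_of_forall_sle_iff {a b : E} (h : ∀ c, sle c a ↔ sle c b) : a = b :=
  sle_antisymm ((h a).1 (sle_refl a)) ((h b).2 (sle_refl b))

end Semilattice

namespace Relator.BiUnique
variable {α β : Type*} {r : α → β → Prop}

theorem flip (hr : BiUnique r) : BiUnique (_root_.flip r) :=
  ⟨fun _ _ _ h h' => hr.2 h h', fun _ _ _ h h' => hr.1 h h'⟩

theorem comp_flip_comp (hr : BiUnique r) : r ∘r _root_.flip r ∘r r = r := by
  funext x z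
  refine propext ⟨fun ⟨y, hxy, w, hwy, hwz⟩ => hr.1 hwy hxy ▸ hwz, fun hxz => ?_⟩
  exact ⟨z, hxz, x, hxz, hxz⟩

theorem flip_of_comp_comp {s : β → α → Prop} (hr : BiUnique r) (h : r ∘r s ∘r r = r)
    {x : α} {y : β} (hxy : r x y) : s y x := by
  obtain ⟨y', hxy', x', hy'x', hx'y⟩ := (congrFun₂ h x y).mpr hxy
  rwa [hr.2 hxy hxy', ← hr.1 hx'y hxy]

theorem eq_flip_of_comp_comp {s : β → α → Prop} (hr : BiUnique r) (hs : BiUnique s)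
    (hrsr : r ∘r s ∘r r = r) (hsrs : s ∘r r ∘r s = s) : s = _root_.flip r := by
  funext y x
  exact propext ⟨hs.flip_of_comp_comp hsrs, hr.flip_of_comp_comp hrsr⟩

theorem comp_self_eq_iff {r : α → α → Prop} (hr : BiUnique r) : r ∘r r = r ↔ r ≤ (· = ·) := by
  refine ⟨fun h x y hxy => ?_, fun h => ?_⟩
  · obtain ⟨m, hxm, hmy⟩ := (congrFun₂ h x y).mpr hxy
    rw [hr.2 hxm hxy] at hmy
    exact hr.1 hxy hmy
  · funext x z
    refine propext ⟨fun ⟨y, hxy, hyz⟩ => h x y hxy ▸ hyz, fun hxz => ?_⟩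
    exact ⟨z, hxz, h x z hxz ▸ hxz⟩

end Relator.BiUnique

theorem Relation.comp_restrict {α β γ : Type*} {r : α → β → Prop} {s : β → γ → Prop}
    {P : α → Prop} {Q : β → Prop} (h : ∀ x y z, r x y → s y z → P x ∧ Q y) :
    (fun x y => r x y ∧ P x) ∘r (fun y z => s y z ∧ Q y) = r ∘r s := by
  funext x z
  refine propext ⟨fun ⟨y, ⟨hxy, _⟩, hyz, _⟩ => ⟨y, hxy, hyz⟩, fun ⟨y, hxy, hyz⟩ => ?_⟩
  obtain ⟨hx, hy⟩ := h x y z hxy hyz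
  exact ⟨y, ⟨hxy, hx⟩, hyz, hy⟩

namespace Equiv
variable {α β γ : Type*} {p p' : α → Prop} {q q' : β → Prop}

def subtypeGraph (σ : Subtype p ≃ Subtype q) (x : α) (y : β) : Prop :=
  ∃ h : p x, (σ ⟨x, h⟩).1 = y

theorem biUnique_subtypeGraph (σ : Subtype p ≃ Subtype q) : Relator.BiUnique σ.subtypeGraph := by
  refine ⟨fun x x' y ⟨hx, hxy⟩ ⟨hx', hx'y⟩ => ?_, fun x y y' ⟨_, hxy⟩ ⟨_, hxy'⟩ => hxy ▸ hxy'⟩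
  exact congrArg Subtype.val (σ.injective (Subtype.ext (hxy.trans hx'y.symm)))

theorem exists_subtypeGraph_iff (σ : Subtype p ≃ Subtype q) (x : α) :
    (∃ y, σ.subtypeGraph x y) ↔ p x :=
  ⟨fun ⟨_, hx, _⟩ => hx, fun hx => ⟨_, hx, rfl⟩⟩

theorem subtypeGraph_symm (σ : Subtype p ≃ Subtype q) :
    σ.symm.subtypeGraph = flip σ.subtypeGraph := by
  funext y x
  refine propext ⟨fun ⟨hy, hyx⟩ => ⟨hyx ▸ (σ.symm ⟨y, hy⟩).2, ?_⟩, fun ⟨hx, hxy⟩ => ?_⟩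
  · simp_rw [← hyx, Subtype.coe_eta, apply_symm_apply]
  · exact ⟨hxy ▸ (σ ⟨x, hx⟩).2, by simp_rw [← hxy, Subtype.coe_eta, symm_apply_apply]⟩

theorem exists_subtypeGraph_iff' (σ : Subtype p ≃ Subtype q) (y : β) :
    (∃ x, σ.subtypeGraph x y) ↔ q y := by
  rw [← σ.symm.exists_subtypeGraph_iff, subtypeGraph_symm]
  rfl

theorem subtypeGraph_trans {r : γ → Prop} (σ : Subtype p ≃ Subtype q) (h : ∀ y, q y ↔ q' y)
    (τ : Subtype q' ≃ Subtype r) :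
    (σ.trans ((subtypeEquivRight h).trans τ)).subtypeGraph = σ.subtypeGraph ∘r τ.subtypeGraph := by
  funext x z
  refine propext ⟨fun ⟨hx, hxz⟩ => ⟨_, ⟨hx, rfl⟩, _, hxz⟩, fun ⟨y, ⟨hx, hxy⟩, hy, hyz⟩ => ⟨hx, ?_⟩⟩
  subst hxy
  exact hyz

def subtypeRestrict (σ : Subtype p ≃ Subtype q) (hp : ∀ {x}, p' x → p x) (hq : ∀ {y}, q' y → q y)
    (h : ∀ x, p' x.1 ↔ q' (σ x).1) : Subtype p' ≃ Subtype q' :=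
  (subtypeSubtypeEquivSubtype hp).symm.trans
    ((σ.subtypeEquiv h).trans (subtypeSubtypeEquivSubtype hq))

theorem eq_of_subtypeGraph_eq {σ τ : Subtype p ≃ Subtype q}
    (h : σ.subtypeGraph = τ.subtypeGraph) : σ = τ := by
  ext x
  obtain ⟨_, hx⟩ := (congrFun₂ h x.1 (σ x).1).mp ⟨x.2, rfl⟩
  exact hx.symm

theorem subtypeGraph_le_eq_iff {p q : α → Prop} (σ : Subtype p ≃ Subtype q) :
    σ.subtypeGraph ≤ (· = ·) ↔ ∀ x, (σ x).1 = x.1 :=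
  ⟨fun h x => (h x.1 _ ⟨x.2, rfl⟩).symm, fun h _ _ ⟨hx, hxy⟩ => hxy ▸ (h ⟨_, hx⟩).symm⟩

theorem pred_iff_of_val_eq {p q : α → Prop} (σ : Subtype p ≃ Subtype q)
    (h : ∀ x, (σ x).1 = x.1) (x : α) : p x ↔ q x :=
  ⟨fun hx => by simpa only [h] using (σ ⟨x, hx⟩).2, fun hx => by
    have hx' : (σ.symm ⟨x, hx⟩).1 = x := by simpa using (h (σ.symm ⟨x, hx⟩)).symm
    exact hx' ▸ (σ.symm ⟨x, hx⟩).2⟩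

end Equiv

namespace MunnElt
variable {X E : Type*} [MeetSL E] {P : SPresheaf X E}

theorem maps_eq (t : MunnElt P) : t.maps = t.α.subtypeGraph := rfl

theorem mapsE_eq (t : MunnElt P) : t.mapsE = t.θ.subtypeGraph := rfl

theorem sle_p_α_iff (t : MunnElt P) (x : P.sub t.e) (u : dOn E t.e) :
    sle (P.p (t.α x).1) (t.θ u).1 ↔ sle (P.p x.1) u.1 := by
  rw [t.compat]
  exact (t.θ_ord _ u).symm

def restrict (t : MunnElt P) (u : dOn E t.e) : MunnElt P where
  e := u.1
  f := (t.θ u).1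
  α := t.α.subtypeRestrict (sle_trans · u.2) (sle_trans · (t.θ u).2)
    fun x => (t.sle_p_α_iff x u).symm
  θ := t.θ.subtypeRestrict (sle_trans · u.2) (sle_trans · (t.θ u).2) fun a => t.θ_ord a u
  α_ord x y := t.α_ord ⟨x.1, sle_trans x.2 u.2⟩ ⟨y.1, sle_trans y.2 u.2⟩
  θ_ord a b := t.θ_ord ⟨a.1, sle_trans a.2 u.2⟩ ⟨b.1, sle_trans b.2 u.2⟩
  compat x := t.compat ⟨x.1, sle_trans x.2 u.2⟩

def comp (a b : MunnElt P) (h : b.f = a.e) : MunnElt P where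
  e := b.e
  f := a.f
  α := b.α.trans ((Equiv.subtypeEquivRight fun _ => h ▸ Iff.rfl).trans a.α)
  θ := b.θ.trans ((Equiv.subtypeEquivRight fun _ => h ▸ Iff.rfl).trans a.θ)
  α_ord x y := (b.α_ord x y).trans (a.α_ord ⟨_, h ▸ (b.α x).2⟩ ⟨_, h ▸ (b.α y).2⟩)
  θ_ord x y := (b.θ_ord x y).trans (a.θ_ord ⟨_, h ▸ (b.θ x).2⟩ ⟨_, h ▸ (b.θ y).2⟩)
  compat x := (a.compat _).trans (congrArg (fun z => (a.θ z).1) (Subtype.ext (b.compat x)))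

/-- Both factors are restricted to the meet `b.f * a.e` of the codomain of `b` and the domain
of `a`, then composed. -/
instance : Mul (MunnElt P) where
  mul a b := comp (a.restrict ⟨b.f * a.e, (sle_mul_iff.1 (sle_refl _)).2⟩)
    (b.restrict (b.θ.symm ⟨b.f * a.e, (sle_mul_iff.1 (sle_refl _)).1⟩))
    (by simp [restrict])

instance : Inv (MunnElt P) where
  inv t :=
  { e := t.f
    f := t.e
    α := t.α.symm
    θ := t.θ.symm
    α_ord x y := by simpa using (t.α_ord (t.α.symm x) (t.α.symm y)).symm
    θ_ord a b := by simpa using (t.θ_ord (t.θ.symm a) (t.θ.symm b)).symm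
    compat x := by
      have hx : (⟨P.p x.1, x.2⟩ : dOn E t.f) = t.θ ⟨P.p (t.α.symm x).1, (t.α.symm x).2⟩ :=
        Subtype.ext (by simpa using t.compat (t.α.symm x))
      rw [hx, t.θ.symm_apply_apply] }

theorem sle_of_maps {t : MunnElt P} {x y : X} (hxy : t.maps x y) : sle (P.p y) t.f :=
  hxy.2 ▸ (t.α _).2

theorem sle_of_mapsE {t : MunnElt P} {a b : E} (hab : t.mapsE a b) : sle b t.f :=
  hab.2 ▸ (t.θ _).2

theorem sle_iff_of_maps {t : MunnElt P} {x y : X} (hxy : t.maps x y) (u : dOn E t.e) :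
    sle (P.p x) u.1 ↔ sle (P.p y) (t.θ u).1 := by
  obtain ⟨hx, rfl⟩ := hxy
  exact (t.sle_p_α_iff ⟨x, hx⟩ u).symm

theorem sle_iff_of_mapsE {t : MunnElt P} {a b : E} (hab : t.mapsE a b) (u : dOn E t.e) :
    sle a u.1 ↔ sle b (t.θ u).1 := by
  obtain ⟨ha, rfl⟩ := hab
  exact t.θ_ord ⟨a, ha⟩ u

theorem maps_restrict (t : MunnElt P) (u : dOn E t.e) :
    (t.restrict u).maps = fun x y => t.maps x y ∧ sle (P.p x) u.1 := by
  funext x y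
  exact propext ⟨fun ⟨hx, hxy⟩ => ⟨⟨sle_trans hx u.2, hxy⟩, hx⟩, fun ⟨⟨_, hxy⟩, hx⟩ => ⟨hx, hxy⟩⟩

theorem mapsE_restrict (t : MunnElt P) (u : dOn E t.e) :
    (t.restrict u).mapsE = fun a b => t.mapsE a b ∧ sle a u.1 := by
  funext a b
  exact propext ⟨fun ⟨ha, hab⟩ => ⟨⟨sle_trans ha u.2, hab⟩, ha⟩, fun ⟨⟨_, hab⟩, ha⟩ => ⟨ha, hab⟩⟩

theorem maps_comp (a b : MunnElt P) (h : b.f = a.e) : (comp a b h).maps = b.maps ∘r a.maps :=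
  Equiv.subtypeGraph_trans _ _ _

theorem mapsE_comp (a b : MunnElt P) (h : b.f = a.e) :
    (comp a b h).mapsE = b.mapsE ∘r a.mapsE :=
  Equiv.subtypeGraph_trans _ _ _

theorem maps_mul (a b : MunnElt P) : (a * b).maps = b.maps ∘r a.maps := by
  refine (maps_comp _ _ _).trans ?_
  rw [maps_restrict, maps_restrict]
  refine Relation.comp_restrict fun x y z hxy hyz => ?_
  have hy : sle (P.p y) (b.f * a.e) := sle_mul_iff.2 ⟨sle_of_maps hxy, hyz.1⟩
  refine ⟨(sle_iff_of_maps hxy _).2 ?_, hy⟩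
  rwa [Equiv.apply_symm_apply]

theorem mapsE_mul (a b : MunnElt P) : (a * b).mapsE = b.mapsE ∘r a.mapsE := by
  refine (mapsE_comp _ _ _).trans ?_
  rw [mapsE_restrict, mapsE_restrict]
  refine Relation.comp_restrict fun x y z hxy hyz => ?_
  have hy : sle y (b.f * a.e) := sle_mul_iff.2 ⟨sle_of_mapsE hxy, hyz.1⟩
  refine ⟨(sle_iff_of_mapsE hxy _).2 ?_, hy⟩
  rwa [Equiv.apply_symm_apply]

theorem maps_inv (t : MunnElt P) : t⁻¹.maps = flip t.maps := t.α.subtypeGraph_symm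

theorem mapsE_inv (t : MunnElt P) : t⁻¹.mapsE = flip t.mapsE := t.θ.subtypeGraph_symm

theorem ext_maps {s t : MunnElt P} (hα : s.maps = t.maps) (hθ : s.mapsE = t.mapsE) : s = t := by
  have he : s.e = t.e := eq_of_forall_sle_iff fun a => by
    rw [← s.θ.exists_subtypeGraph_iff, ← t.θ.exists_subtypeGraph_iff]
    exact exists_congr fun b => iff_of_eq (congrFun₂ hθ a b)
  have hf : s.f = t.f := eq_of_forall_sle_iff fun b => by
    rw [← s.θ.exists_subtypeGraph_iff', ← t.θ.exists_subtypeGraph_iff']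
    exact exists_congr fun a => iff_of_eq (congrFun₂ hθ a b)
  obtain ⟨e, f, α, θ⟩ := s
  obtain ⟨e', f', α', θ'⟩ := t
  subst he hf
  obtain rfl := Equiv.eq_of_subtypeGraph_eq hα
  obtain rfl := Equiv.eq_of_subtypeGraph_eq hθ
  rfl

instance : Semigroup (MunnElt P) where
  mul_assoc a b c := ext_maps (by simp only [maps_mul, Relation.comp_assoc])
    (by simp only [mapsE_mul, Relation.comp_assoc])

theorem biUnique_maps (t : MunnElt P) : Relator.BiUnique t.maps := t.α.biUnique_subtypeGraph

theorem biUnique_mapsE (t : MunnElt P) : Relator.BiUnique t.mapsE := t.θ.biUnique_subtypeGraph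

theorem mul_inv_mul (t : MunnElt P) : t * t⁻¹ * t = t :=
  ext_maps (by rw [maps_mul, maps_mul, maps_inv, t.biUnique_maps.comp_flip_comp])
    (by rw [mapsE_mul, mapsE_mul, mapsE_inv, t.biUnique_mapsE.comp_flip_comp])

theorem inv_mul_inv (t : MunnElt P) : t⁻¹ * t * t⁻¹ = t⁻¹ :=
  ext_maps (by rw [maps_mul, maps_mul, maps_inv]; exact t.biUnique_maps.flip.comp_flip_comp)
    (by rw [mapsE_mul, mapsE_mul, mapsE_inv]; exact t.biUnique_mapsE.flip.comp_flip_comp)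

theorem eq_inv_of_mul_mul_eq {s t : MunnElt P} (hsts : s * t * s = s) (htst : t * s * t = t) :
    t = s⁻¹ := by
  refine ext_maps ?_ ?_
  · rw [maps_inv]
    refine s.biUnique_maps.eq_flip_of_comp_comp t.biUnique_maps ?_ ?_
    · rw [← maps_mul, ← maps_mul, hsts]
    · rw [← maps_mul, ← maps_mul, htst]
  · rw [mapsE_inv]
    refine s.biUnique_mapsE.eq_flip_of_comp_comp t.biUnique_mapsE ?_ ?_
    · rw [← mapsE_mul, ← mapsE_mul, hsts]
    · rw [← mapsE_mul, ← mapsE_mul, htst]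

theorem mul_self_eq_self_iff (t : MunnElt P) :
    t * t = t ↔ t.e = t.f ∧ (∀ x, (t.α x).1 = x.1) ∧ ∀ a, (t.θ a).1 = a.1 := by
  have hgraph : t * t = t ↔ t.maps ∘r t.maps = t.maps ∧ t.mapsE ∘r t.mapsE = t.mapsE :=
    ⟨fun h => ⟨by rw [← maps_mul, h], by rw [← mapsE_mul, h]⟩,
      fun ⟨hα, hθ⟩ => ext_maps (by rw [maps_mul, hα]) (by rw [mapsE_mul, hθ])⟩
  rw [hgraph, t.biUnique_maps.comp_self_eq_iff, t.biUnique_mapsE.comp_self_eq_iff, maps_eq,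
    mapsE_eq, Equiv.subtypeGraph_le_eq_iff, Equiv.subtypeGraph_le_eq_iff]
  exact ⟨fun ⟨hα, hθ⟩ => ⟨eq_of_forall_sle_iff (t.θ.pred_iff_of_val_eq hθ), hα, hθ⟩,
    fun ⟨_, hα, hθ⟩ => ⟨hα, hθ⟩⟩

end MunnElt

/-- the generalised Munn semigroup `T_X` of a presheaf `(X, E, p)` is an
inverse semigroup: `X·e ∩ X·f = X·ef`, multiplication is composition of restrictions to
intersections of principal subpresheaves, the inverse of `(α, θ)` is `(α⁻¹, θ⁻¹)`, and the
idempotents are exactly the pairs `(id_{X·e}, id_{e↓})` for `e ∈ E`. -/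
theorem munn_inverse_semigroup {X E : Type*} [MeetSL E] (P : SPresheaf X E) :
    (∀ e f : E,
      {x : X | sle (P.p x) e} ∩ {x : X | sle (P.p x) f} = {x : X | sle (P.p x) (e * f)}) ∧
    ∃ (mul : MunnElt P → MunnElt P → MunnElt P) (inv : MunnElt P → MunnElt P),
      IsMunnMul mul ∧ IsMunnInv inv ∧
      (∀ a b c : MunnElt P, mul (mul a b) c = mul a (mul b c)) ∧
      (∀ a : MunnElt P, mul (mul a (inv a)) a = a) ∧
      (∀ a : MunnElt P, mul (mul (inv a) a) (inv a) = inv a) ∧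
      (∀ a b : MunnElt P, mul (mul a b) a = a → mul (mul b a) b = b → b = inv a) ∧
      (∀ t : MunnElt P, mul t t = t ↔
        (t.e = t.f ∧ (∀ x : P.sub t.e, ((t.α x).1 : X) = x.1) ∧
          (∀ a : dOn E t.e, ((t.θ a).1 : E) = a.1))) := by
  refine ⟨fun e f => Set.ext fun x => sle_mul_iff.symm, (· * ·), (·⁻¹), fun a b => ⟨?_, ?_⟩,
    fun t => ⟨?_, ?_⟩, mul_assoc, MunnElt.mul_inv_mul, MunnElt.inv_mul_inv,
    fun _ _ => MunnElt.eq_inv_of_mul_mul_eq, MunnElt.mul_self_eq_self_iff⟩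
  · exact fun x z => iff_of_eq (congrFun₂ (MunnElt.maps_mul a b) x z)
  · exact fun h k => iff_of_eq (congrFun₂ (MunnElt.mapsE_mul a b) h k)
  · exact fun x y => iff_of_eq (congrFun₂ (MunnElt.maps_inv t) x y)
  · exact fun a b => iff_of_eq (congrFun₂ (MunnElt.mapsE_inv t) a b)
end

section
/- (Generalised Munn representation.) Let S be an inverse semigroup, (X,S,p) a supported action, and Y = (X,E(S),p) the presheaf over the semilattice E(S) obtained by restricting the action to idempotents. For each s ∈ S the maps α_s : X·(ss⁻¹) → X·(s⁻¹s), y ↦ y·s, and θ_s : (ss⁻¹)↓ → (s⁻¹s)↓, e ↦ s⁻¹ e s, are order-isomorphisms with p(α_s(y)) = θ_s(p(y)), so (α_s, θ_s) ∈ T_Y. The map ξ : S → T_Y defined by ξ(s) = (α_{s⁻¹}, θ_{s⁻¹}) is an idempotent-separating homomorphism whose image is a wide inverse subsemigroup of T_Y, i.e. contains all the idempotents (id_{X·e}, id_{e↓}) of T_Y. -/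
/-- An inverse semigroup: every element `a` has a unique inverse `a⁻¹` with
`a * a⁻¹ * a = a` and `a⁻¹ * a * a⁻¹ = a⁻¹`. -/
class InvSemigroup (S : Type*) extends Semigroup S, Inv S where
  mul_inv_mul : ∀ a : S, a * a⁻¹ * a = a
  inv_mul_inv : ∀ a : S, a⁻¹ * a * a⁻¹ = a⁻¹
  inv_unique : ∀ a b : S, a * b * a = a → b * a * b = b → b = a⁻¹

namespace InvSemigroup

variable {S : Type*} [InvSemigroup S]

theorem inv_eq {a b : S} (h1 : a * b * a = a) (h2 : b * a * b = b) : b = a⁻¹ :=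
  inv_unique a b h1 h2

theorem inv_inv (a : S) : a⁻¹⁻¹ = a :=
  (inv_eq (inv_mul_inv a) (mul_inv_mul a)).symm

theorem idem_inv {e : S} (he : e * e = e) : e⁻¹ = e := by
  have h : e = e⁻¹ := inv_eq (a := e) (b := e) (by rw [he, he]) (by rw [he, he])
  exact h.symm

theorem mul_mul {a : S} (ha : a * a = a) (y : S) : a * (a * y) = a * y := by
  rw [← mul_assoc, ha]

theorem fse_eq {e f : S} (he : e * e = e) (hf : f * f = f) :
    f * (e * f)⁻¹ * e = (e * f)⁻¹ := by
  have hs := mul_inv_mul (e * f)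
  have hs2 := inv_mul_inv (e * f)
  simp only [mul_assoc] at hs hs2
  have h3 := congrArg (· * e) hs2
  simp only [mul_assoc] at h3
  apply inv_eq
  · simp only [mul_assoc]
    rw [mul_mul he, mul_mul hf]
    exact hs
  · simp only [mul_assoc]
    rw [mul_mul he, mul_mul hf]
    rw [h3]

theorem s_idem {e f : S} (he : e * e = e) (hf : f * f = f) :
    (e * f)⁻¹ * (e * f)⁻¹ = (e * f)⁻¹ := by
  have hs2 := inv_mul_inv (e * f)
  simp only [mul_assoc] at hs2
  have h3 := congrArg (· * e) hs2
  simp only [mul_assoc] at h3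
  have h4 := fse_eq he hf
  simp only [mul_assoc] at h4
  rw [← h4]
  simp only [mul_assoc]
  rw [h3]

theorem idem_mul {e f : S} (he : e * e = e) (hf : f * f = f) :
    (e * f) * (e * f) = e * f := by
  have hs := s_idem he hf
  have hinv : (e * f)⁻¹ = e * f := by
    have h1 := idem_inv hs
    rw [InvSemigroup.inv_inv] at h1
    exact h1.symm
  rw [hinv] at hs
  exact hs

theorem idem_comm {e f : S} (he : e * e = e) (hf : f * f = f) : e * f = f * e := by
  have hef := idem_mul he hf
  have hfe := idem_mul hf he
  have h1 : f * e = (e * f)⁻¹ := by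
    apply inv_eq
    · simp only [mul_assoc]
      rw [mul_mul hf, mul_mul he]
      have h5 := hef
      simp only [mul_assoc] at h5
      exact h5
    · simp only [mul_assoc]
      rw [mul_mul he, mul_mul hf]
      have h5 := hfe
      simp only [mul_assoc] at h5
      exact h5
  have h2 : (e * f)⁻¹ = e * f := idem_inv hef
  rw [h1, h2]

theorem d_idem (s : S) : (s⁻¹ * s) * (s⁻¹ * s) = s⁻¹ * s := by
  have h := inv_mul_inv s
  calc (s⁻¹ * s) * (s⁻¹ * s) = (s⁻¹ * s * s⁻¹) * s := by simp only [mul_assoc]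
    _ = s⁻¹ * s := by rw [h]

theorem r_idem (s : S) : (s * s⁻¹) * (s * s⁻¹) = s * s⁻¹ := by
  have h := mul_inv_mul s
  calc (s * s⁻¹) * (s * s⁻¹) = (s * s⁻¹ * s) * s⁻¹ := by simp only [mul_assoc]
    _ = s * s⁻¹ := by rw [h]

theorem mul_inv_rev (a b : S) : (a * b)⁻¹ = b⁻¹ * a⁻¹ := by
  have hcomm : (b * b⁻¹) * (a⁻¹ * a) = (a⁻¹ * a) * (b * b⁻¹) :=
    idem_comm (r_idem b) (d_idem a)
  symm
  apply inv_eq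
  · calc a * b * (b⁻¹ * a⁻¹) * (a * b)
        = a * ((b * b⁻¹) * (a⁻¹ * a)) * b := by simp only [mul_assoc]
      _ = a * ((a⁻¹ * a) * (b * b⁻¹)) * b := by rw [hcomm]
      _ = (a * a⁻¹ * a) * (b * b⁻¹ * b) := by simp only [mul_assoc]
      _ = a * b := by rw [mul_inv_mul, mul_inv_mul]
  · calc b⁻¹ * a⁻¹ * (a * b) * (b⁻¹ * a⁻¹)
        = b⁻¹ * ((a⁻¹ * a) * (b * b⁻¹)) * a⁻¹ := by simp only [mul_assoc]
      _ = b⁻¹ * ((b * b⁻¹) * (a⁻¹ * a)) * a⁻¹ := by rw [hcomm]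
      _ = (b⁻¹ * b * b⁻¹) * (a⁻¹ * a * a⁻¹) := by simp only [mul_assoc]
      _ = b⁻¹ * a⁻¹ := by rw [inv_mul_inv, inv_mul_inv]

end InvSemigroup

/-- A supported (right) action `(X, S, p)` of an inverse semigroup `S` on a set `X`:
the support map `p` takes values in the idempotents of `S` and satisfies (SA1)-(SA3). -/
structure SupportedAction (X : Type*) (S : Type*) [InvSemigroup S] where
  act : X → S → X
  p : X → S
  p_idem : ∀ x, p x * p x = p x
  act_act : ∀ x s t, act (act x s) t = act x (s * t)
  act_p : ∀ x, act x (p x) = x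
  p_act : ∀ x s, p (act x s) = s⁻¹ * p x * s

namespace SupportedAction
variable {X S : Type*} [InvSemigroup S]

/-- The natural partial order on a supported action: `x ≤ y` iff `x = y · p(x)`. -/
def xle (A : SupportedAction X S) (x y : X) : Prop := x = A.act y (A.p x)

/-- The characteristic congruence of a supported action:
`(s, t) ∈ ρ_X` iff `x · s = x · t` for all `x ∈ X`. -/
def rho (A : SupportedAction X S) (s t : S) : Prop := ∀ x, A.act x s = A.act x t

end SupportedAction

/-- The set of idempotents `E(S)` of an inverse semigroup. -/
abbrev ES (S : Type*) [InvSemigroup S] : Type _ := {e : S // e * e = e}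

open InvSemigroup in
instance instMeetSLES (S : Type*) [InvSemigroup S] : MeetSL (ES S) where
  mul a b := ⟨a.1 * b.1, idem_mul a.2 b.2⟩
  mul_assoc a b c := Subtype.ext (mul_assoc a.1 b.1 c.1)
  mul_comm a b := Subtype.ext (idem_comm a.2 b.2)
  idem a := Subtype.ext a.2

open InvSemigroup in
/-- The presheaf over `E(S)` obtained by restricting a supported action to the idempotents. -/
def SupportedAction.toPresheaf {X S : Type*} [InvSemigroup S] (A : SupportedAction X S) :
    SPresheaf X (ES S) where
  act x e := A.act x e.1
  p x := ⟨A.p x, A.p_idem x⟩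
  act_act x e f := A.act_act x e.1 f.1
  act_p x := A.act_p x
  p_act x e := by
    apply Subtype.ext
    show A.p (A.act x e.1) = A.p x * e.1
    rw [A.p_act, idem_inv e.2, idem_comm e.2 (A.p_idem x), mul_assoc, e.2]

/-- `ξ` is the generalised Munn representation `S → T_Y` (where `Y` is the presheaf
obtained from the supported action by restriction to the idempotents): it sends `s` to
`(α_{s⁻¹}, θ_{s⁻¹})` where `α_{s⁻¹} : X·(s⁻¹s) → X·(ss⁻¹), y ↦ y · s⁻¹` and
`θ_{s⁻¹} : (s⁻¹s)↓ → (ss⁻¹)↓, e ↦ s e s⁻¹`. -/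
def IsMunnRep {X S : Type*} [InvSemigroup S] (A : SupportedAction X S)
    (ξ : S → MunnElt A.toPresheaf) : Prop :=
  ∀ s : S, ((ξ s).e).1 = s⁻¹ * s ∧ ((ξ s).f).1 = s * s⁻¹ ∧
    (∀ x : A.toPresheaf.sub (ξ s).e, ((ξ s).α x).1 = A.act x.1 s⁻¹) ∧
    (∀ h : dOn (ES S) (ξ s).e, (((ξ s).θ h).1).1 = s * h.1.1 * s⁻¹)


section MunnAux
open InvSemigroup

/-! ### Semilattice helpers -/

theorem sle_refl' {E : Type*} [MeetSL E] (a : E) : sle a a := (MeetSL.idem a).symm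

theorem sle_antisymm' {E : Type*} [MeetSL E] {a b : E} (h1 : sle a b) (h2 : sle b a) :
    a = b := by
  unfold sle at h1 h2
  rw [h1, mul_comm, ← h2]

theorem sle_es {S : Type*} [InvSemigroup S] {a b : ES S} :
    sle a b ↔ a.1 = a.1 * b.1 := Subtype.ext_iff

/-! ### Graph extensionality for Munn elements -/

theorem MunnElt.graph_ext {X E : Type*} [MeetSL E] {P : SPresheaf X E} {t₁ t₂ : MunnElt P}
    (hm : ∀ x y, t₁.maps x y ↔ t₂.maps x y)
    (hE : ∀ a b, t₁.mapsE a b ↔ t₂.mapsE a b) : t₁ = t₂ := by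
  have he : t₁.e = t₂.e := by
    obtain ⟨h12, -⟩ := (hE t₁.e (t₁.θ ⟨t₁.e, sle_refl' _⟩).1).1 ⟨sle_refl' _, rfl⟩
    obtain ⟨h21, -⟩ := (hE t₂.e (t₂.θ ⟨t₂.e, sle_refl' _⟩).1).2 ⟨sle_refl' _, rfl⟩
    exact sle_antisymm' h12 h21
  have hθ : ∀ (a : E) (h1 : sle a t₁.e) (h2 : sle a t₂.e),
      (t₁.θ ⟨a, h1⟩).1 = (t₂.θ ⟨a, h2⟩).1 := by
    intro a h1 h2
    obtain ⟨h', hv⟩ := (hE a (t₁.θ ⟨a, h1⟩).1).1 ⟨h1, rfl⟩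
    exact hv.symm
  have hα : ∀ (x : X) (h1 : sle (P.p x) t₁.e) (h2 : sle (P.p x) t₂.e),
      (t₁.α ⟨x, h1⟩).1 = (t₂.α ⟨x, h2⟩).1 := by
    intro x h1 h2
    obtain ⟨h', hv⟩ := (hm x (t₁.α ⟨x, h1⟩).1).1 ⟨h1, rfl⟩
    exact hv.symm
  have hf : t₁.f = t₂.f := by
    have hfe : sle t₁.f t₂.f := by
      set a := t₁.θ.symm ⟨t₁.f, sle_refl' _⟩ with ha
      have h1 : (t₁.θ a).1 = t₁.f := by rw [ha, Equiv.apply_symm_apply]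
      have h2 := hθ a.1 a.2 (he ▸ a.2)
      rw [h1] at h2
      have := (t₂.θ ⟨a.1, he ▸ a.2⟩).2
      rw [← h2] at this
      exact this
    have hef : sle t₂.f t₁.f := by
      set a := t₂.θ.symm ⟨t₂.f, sle_refl' _⟩ with ha
      have h1 : (t₂.θ a).1 = t₂.f := by rw [ha, Equiv.apply_symm_apply]
      have ha2 : sle a.1 t₁.e := by rw [he]; exact a.2
      have h2 := hθ a.1 ha2 a.2
      rw [h1] at h2
      have := (t₁.θ ⟨a.1, ha2⟩).2
      rw [h2] at this
      exact this
    exact sle_antisymm' hfe hef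
  obtain ⟨e₁, f₁, α₁, θ₁, ao₁, to₁, c₁⟩ := t₁
  obtain ⟨e₂, f₂, α₂, θ₂, ao₂, to₂, c₂⟩ := t₂
  simp only at he hf hθ hα
  subst he; subst hf
  have hθ' : θ₁ = θ₂ := Equiv.ext fun a => Subtype.ext (hθ a.1 a.2 a.2)
  have hα' : α₁ = α₂ := Equiv.ext fun x => Subtype.ext (hα x.1 x.2 x.2)
  subst hθ'; subst hα'
  rfl

/-! ### Inverse-semigroup computation helpers -/

variable {S : Type*} [InvSemigroup S]

theorem ssi (s : S) : s * (s⁻¹ * s) = s := by rw [← mul_assoc, mul_inv_mul]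

theorem sis (s : S) : s⁻¹ * (s * s⁻¹) = s⁻¹ := by rw [← mul_assoc, inv_mul_inv]

theorem red1 (s w : S) : s * (s⁻¹ * (s * w)) = s * w := by
  rw [← mul_assoc, ← mul_assoc, mul_inv_mul]

theorem red2 (s w : S) : s⁻¹ * (s * (s⁻¹ * w)) = s⁻¹ * w := by
  rw [← mul_assoc, ← mul_assoc, inv_mul_inv]

/-- absorption: if `a ≤ s⁻¹s` then `a · (s⁻¹ s w) = a w`. -/
theorem habs {a s : S} (ha : a = a * (s⁻¹ * s)) (w : S) :
    a * (s⁻¹ * (s * w)) = a * w := by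
  calc a * (s⁻¹ * (s * w)) = (a * (s⁻¹ * s)) * w := by simp only [mul_assoc]
    _ = a * w := by rw [← ha]

theorem habs' {a s : S} (ha : a = a * (s * s⁻¹)) (w : S) :
    a * (s * (s⁻¹ * w)) = a * w := by
  calc a * (s * (s⁻¹ * w)) = (a * (s * s⁻¹)) * w := by simp only [mul_assoc]
    _ = a * w := by rw [← ha]

theorem labs {a s : S} (haa : a * a = a) (ha : a = a * (s⁻¹ * s)) :
    s⁻¹ * (s * a) = a := by
  have hc : (s⁻¹ * s) * a = a * (s⁻¹ * s) := idem_comm (d_idem s) haa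
  calc s⁻¹ * (s * a) = (s⁻¹ * s) * a := by rw [mul_assoc]
    _ = a * (s⁻¹ * s) := hc
    _ = a := ha.symm

theorem labs' {a s : S} (haa : a * a = a) (ha : a = a * (s * s⁻¹)) :
    s * (s⁻¹ * a) = a := by
  have hc : (s * s⁻¹) * a = a * (s * s⁻¹) := idem_comm (r_idem s) haa
  calc s * (s⁻¹ * a) = (s * s⁻¹) * a := by rw [mul_assoc]
    _ = a * (s * s⁻¹) := hc
    _ = a := ha.symm

theorem conj_codom (q s : S) : s * q * s⁻¹ = s * q * s⁻¹ * (s * s⁻¹) := by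
  simp only [mul_assoc, sis]

theorem conj_codom' (q s : S) : s⁻¹ * q * s = s⁻¹ * q * s * (s⁻¹ * s) := by
  simp only [mul_assoc, ssi]

theorem conj_idem {a s : S} (haa : a * a = a) (ha : a = a * (s⁻¹ * s)) :
    (s * a * s⁻¹) * (s * a * s⁻¹) = s * a * s⁻¹ := by
  have h2 : a * (a * s⁻¹) = a * s⁻¹ := by rw [← mul_assoc, haa]
  calc (s * a * s⁻¹) * (s * a * s⁻¹) = s * (a * (s⁻¹ * (s * (a * s⁻¹)))) := by
        simp only [mul_assoc]
    _ = s * (a * (a * s⁻¹)) := by rw [habs ha]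
    _ = s * (a * s⁻¹) := by rw [h2]
    _ = s * a * s⁻¹ := by rw [← mul_assoc]

theorem conj_idem' {a s : S} (haa : a * a = a) (ha : a = a * (s * s⁻¹)) :
    (s⁻¹ * a * s) * (s⁻¹ * a * s) = s⁻¹ * a * s := by
  have h2 : a * (a * s) = a * s := by rw [← mul_assoc, haa]
  calc (s⁻¹ * a * s) * (s⁻¹ * a * s) = s⁻¹ * (a * (s * (s⁻¹ * (a * s)))) := by
        simp only [mul_assoc]
    _ = s⁻¹ * (a * (a * s)) := by rw [habs' ha]
    _ = s⁻¹ * (a * s) := by rw [h2]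
    _ = s⁻¹ * a * s := by rw [← mul_assoc]

theorem conj_back {a s : S} (haa : a * a = a) (ha : a = a * (s⁻¹ * s)) :
    s⁻¹ * (s * a * s⁻¹) * s = a := by
  calc s⁻¹ * (s * a * s⁻¹) * s = s⁻¹ * (s * (a * (s⁻¹ * s))) := by simp only [mul_assoc]
    _ = s⁻¹ * (s * a) := by rw [← ha]
    _ = a := labs haa ha

theorem conj_mono {a b s : S} (ha : a = a * (s⁻¹ * s)) (hab : a = a * b) :
    s * a * s⁻¹ = (s * a * s⁻¹) * (s * b * s⁻¹) := by
  calc s * a * s⁻¹ = s * (a * s⁻¹) := by rw [mul_assoc]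
    _ = s * ((a * b) * s⁻¹) := by rw [← hab]
    _ = s * (a * (b * s⁻¹)) := by simp only [mul_assoc]
    _ = s * (a * (s⁻¹ * (s * (b * s⁻¹)))) := by rw [habs ha]
    _ = (s * a * s⁻¹) * (s * b * s⁻¹) := by simp only [mul_assoc]

theorem idem_sandwich {a e : S} (haa : a * a = a) (hee : e * e = e) (h : a = a * e) :
    e * a * e = a := by
  have hc : a * e = e * a := idem_comm haa hee
  calc e * a * e = e * (a * e) := by rw [mul_assoc]
    _ = e * a := by rw [← h]
    _ = a * e := hc.symm
    _ = a := h.symm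

/-- key domain lemma for the homomorphism property -/
theorem key_dom {q s t : S} (hq : q * q = q) :
    q = q * ((t⁻¹ * s⁻¹) * (s * t)) ↔
      (q = q * (t⁻¹ * t) ∧ t * q * t⁻¹ = (t * q * t⁻¹) * (s⁻¹ * s)) := by
  constructor
  · intro h
    constructor
    · calc q = q * ((t⁻¹ * s⁻¹) * (s * t)) := h
        _ = (q * ((t⁻¹ * s⁻¹) * (s * t))) * (t⁻¹ * t) := by
            simp only [mul_assoc, ssi]
        _ = q * (t⁻¹ * t) := by rw [← h]
    · have hcomm : (s⁻¹ * s) * (t * t⁻¹) = (t * t⁻¹) * (s⁻¹ * s) :=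
        idem_comm (d_idem s) (r_idem t)
      calc t * q * t⁻¹ = t * (q * ((t⁻¹ * s⁻¹) * (s * t))) * t⁻¹ := by rw [← h]
        _ = t * q * t⁻¹ * ((s⁻¹ * s) * (t * t⁻¹)) := by simp only [mul_assoc]
        _ = t * q * t⁻¹ * ((t * t⁻¹) * (s⁻¹ * s)) := by rw [hcomm]
        _ = t * q * t⁻¹ * (s⁻¹ * s) := by simp only [mul_assoc, red2]
  · rintro ⟨h1, h2⟩
    have hc2 : q * (t⁻¹ * t) = (t⁻¹ * t) * q := idem_comm hq (d_idem t)
    calc q = q * (t⁻¹ * t) := h1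
      _ = (t⁻¹ * t) * q := hc2
      _ = (t⁻¹ * t) * (q * (t⁻¹ * t)) := by rw [← h1]
      _ = t⁻¹ * (t * q * t⁻¹) * t := by simp only [mul_assoc]
      _ = t⁻¹ * ((t * q * t⁻¹) * (s⁻¹ * s)) * t := by rw [← h2]
      _ = ((t⁻¹ * t) * q) * ((t⁻¹ * s⁻¹) * (s * t)) := by simp only [mul_assoc]
      _ = (q * (t⁻¹ * t)) * ((t⁻¹ * s⁻¹) * (s * t)) := by rw [← hc2]
      _ = q * ((t⁻¹ * s⁻¹) * (s * t)) := by rw [← h1]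

end MunnAux

section MunnRepAux
open InvSemigroup

variable {X S : Type*} [InvSemigroup S] (A : SupportedAction X S)

theorem conj_back' {a s : S} (haa : a * a = a) (ha : a = a * (s * s⁻¹)) :
    s * (s⁻¹ * a * s) * s⁻¹ = a := by
  calc s * (s⁻¹ * a * s) * s⁻¹ = s * (s⁻¹ * (a * (s * s⁻¹))) := by simp only [mul_assoc]
    _ = s * (s⁻¹ * a) := by rw [← ha]
    _ = a := labs' haa ha

theorem conj_mono_rev {a b s : S} (haa : a * a = a) (hbb : b * b = b)
    (ha : a = a * (s⁻¹ * s)) (hb : b = b * (s⁻¹ * s))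
    (h : s * a * s⁻¹ = (s * a * s⁻¹) * (s * b * s⁻¹)) : a = a * b := by
  have h1 : (a * b) * (s⁻¹ * s) = a * b := by rw [mul_assoc, ← hb]
  calc a = s⁻¹ * (s * a * s⁻¹) * s := (conj_back haa ha).symm
    _ = s⁻¹ * ((s * a * s⁻¹) * (s * b * s⁻¹)) * s := by rw [← h]
    _ = s⁻¹ * (s * (a * (b * (s⁻¹ * s)))) := by
        simp only [mul_assoc]
        rw [habs ha]
    _ = s⁻¹ * (s * (a * b)) := by rw [← hb]
    _ = a * b := labs (idem_mul haa hbb) h1.symm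

theorem act_absorb {x : X} {u : S} (hx : A.p x = A.p x * u) : A.act x u = x := by
  calc A.act x u = A.act (A.act x (A.p x)) u := by rw [A.act_p]
    _ = A.act x (A.p x * u) := A.act_act _ _ _
    _ = A.act x (A.p x) := by rw [← hx]
    _ = x := A.act_p x

theorem xle_mono {x y : X} {s : S} (hx : A.p x = A.p x * (s⁻¹ * s))
    (h : x = A.act y (A.p x)) :
    A.act x s⁻¹ = A.act (A.act y s⁻¹) (A.p (A.act x s⁻¹)) := by
  rw [A.p_act, InvSemigroup.inv_inv, A.act_act]
  have hc : A.p x * (s⁻¹ * s) = (s⁻¹ * s) * A.p x := idem_comm (A.p_idem x) (d_idem s)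
  have hval : A.p x * s⁻¹ = s⁻¹ * (s * A.p x * s⁻¹) := by
    calc A.p x * s⁻¹ = (A.p x * (s⁻¹ * s)) * s⁻¹ := by rw [← hx]
      _ = ((s⁻¹ * s) * A.p x) * s⁻¹ := by rw [hc]
      _ = s⁻¹ * (s * A.p x * s⁻¹) := by simp only [mul_assoc]
  calc A.act x s⁻¹ = A.act (A.act y (A.p x)) s⁻¹ := by rw [← h]
    _ = A.act y (A.p x * s⁻¹) := A.act_act _ _ _
    _ = A.act y (s⁻¹ * (s * A.p x * s⁻¹)) := by rw [hval]

/-- The element `ξ(s) = (α_{s⁻¹}, θ_{s⁻¹})` of the generalised Munn semigroup. -/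
def xiElt (s : S) : MunnElt A.toPresheaf where
  e := ⟨s⁻¹ * s, d_idem s⟩
  f := ⟨s * s⁻¹, r_idem s⟩
  α := {
    toFun := fun x => ⟨A.act x.1 s⁻¹, by
      apply sle_es.mpr
      show A.p (A.act x.1 s⁻¹) = A.p (A.act x.1 s⁻¹) * (s * s⁻¹)
      rw [A.p_act, InvSemigroup.inv_inv]
      exact conj_codom _ _⟩
    invFun := fun y => ⟨A.act y.1 s, by
      apply sle_es.mpr
      show A.p (A.act y.1 s) = A.p (A.act y.1 s) * (s⁻¹ * s)
      rw [A.p_act]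
      exact conj_codom' _ _⟩
    left_inv := fun x => by
      apply Subtype.ext
      show A.act (A.act x.1 s⁻¹) s = x.1
      rw [A.act_act]
      exact act_absorb A (sle_es.mp x.2)
    right_inv := fun y => by
      apply Subtype.ext
      show A.act (A.act y.1 s) s⁻¹ = y.1
      rw [A.act_act]
      exact act_absorb A (sle_es.mp y.2) }
  θ := {
    toFun := fun h => ⟨⟨s * h.1.1 * s⁻¹, conj_idem h.1.2 (sle_es.mp h.2)⟩, by
      apply sle_es.mpr
      exact conj_codom _ _⟩
    invFun := fun k => ⟨⟨s⁻¹ * k.1.1 * s, conj_idem' k.1.2 (sle_es.mp k.2)⟩, by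
      apply sle_es.mpr
      exact conj_codom' _ _⟩
    left_inv := fun h => by
      apply Subtype.ext
      apply Subtype.ext
      show s⁻¹ * (s * h.1.1 * s⁻¹) * s = h.1.1
      exact conj_back h.1.2 (sle_es.mp h.2)
    right_inv := fun k => by
      apply Subtype.ext
      apply Subtype.ext
      show s * (s⁻¹ * k.1.1 * s) * s⁻¹ = k.1.1
      exact conj_back' k.1.2 (sle_es.mp k.2) }
  α_ord := fun x y => by
    constructor
    · intro h
      show A.act x.1 s⁻¹ = A.act (A.act y.1 s⁻¹) (A.p (A.act x.1 s⁻¹))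
      exact xle_mono A (sle_es.mp x.2) h
    · intro h
      have h' : A.act x.1 s⁻¹ = A.act (A.act y.1 s⁻¹) (A.p (A.act x.1 s⁻¹)) := h
      have hx' : A.p (A.act x.1 s⁻¹) = A.p (A.act x.1 s⁻¹) * (s⁻¹⁻¹ * s⁻¹) := by
        rw [A.p_act, InvSemigroup.inv_inv]
        exact conj_codom _ _
      have h2 := xle_mono A hx' h'
      rw [InvSemigroup.inv_inv] at h2
      simp only [A.act_act] at h2
      rw [act_absorb A (sle_es.mp x.2)] at h2
      have h3 : s⁻¹ * s * A.p x.1 = A.p x.1 := by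
        rw [mul_assoc]
        exact labs (A.p_idem x.1) (sle_es.mp x.2)
      rw [h3] at h2
      exact h2
  θ_ord := fun a b => by
    constructor
    · intro h
      apply sle_es.mpr
      exact conj_mono (sle_es.mp a.2) (sle_es.mp h)
    · intro h
      apply sle_es.mpr
      exact conj_mono_rev a.1.2 b.1.2 (sle_es.mp a.2) (sle_es.mp b.2) (sle_es.mp h)
  compat := fun x => by
    apply Subtype.ext
    show A.p (A.act x.1 s⁻¹) = s * A.p x.1 * s⁻¹
    rw [A.p_act, InvSemigroup.inv_inv]

theorem xi_maps {s : S} {x y : X} :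
    (xiElt A s).maps x y ↔ (A.p x = A.p x * (s⁻¹ * s) ∧ y = A.act x s⁻¹) := by
  constructor
  · rintro ⟨h, rfl⟩
    exact ⟨sle_es.mp h, rfl⟩
  · rintro ⟨h, rfl⟩
    exact ⟨sle_es.mpr h, rfl⟩

theorem xi_mapsE {s : S} {a b : ES S} :
    (xiElt A s).mapsE a b ↔ (a.1 = a.1 * (s⁻¹ * s) ∧ b.1 = s * a.1 * s⁻¹) := by
  constructor
  · rintro ⟨h, rfl⟩
    exact ⟨sle_es.mp h, rfl⟩
  · rintro ⟨h, hb⟩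
    exact ⟨sle_es.mpr h, Subtype.ext hb.symm⟩

theorem xi_hom (mul : MunnElt A.toPresheaf → MunnElt A.toPresheaf → MunnElt A.toPresheaf)
    (hmul : IsMunnMul mul) (s t : S) :
    xiElt A (s * t) = mul (xiElt A s) (xiElt A t) := by
  apply MunnElt.graph_ext
  · intro x z
    rw [xi_maps, (hmul (xiElt A s) (xiElt A t)).1 x z]
    constructor
    · rintro ⟨hd, rfl⟩
      rw [InvSemigroup.mul_inv_rev] at hd
      obtain ⟨h1, h2⟩ := (key_dom (A.p_idem x)).1 hd
      refine ⟨A.act x t⁻¹, (xi_maps A).mpr ⟨h1, rfl⟩, (xi_maps A).mpr ⟨?_, ?_⟩⟩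
      · rw [A.p_act, InvSemigroup.inv_inv]
        exact h2
      · rw [A.act_act, InvSemigroup.mul_inv_rev]
    · rintro ⟨y, hty, hsy⟩
      obtain ⟨h1, rfl⟩ := (xi_maps A).mp hty
      obtain ⟨h2, rfl⟩ := (xi_maps A).mp hsy
      rw [A.p_act, InvSemigroup.inv_inv] at h2
      refine ⟨?_, ?_⟩
      · rw [InvSemigroup.mul_inv_rev]
        exact (key_dom (A.p_idem x)).2 ⟨h1, h2⟩
      · rw [A.act_act, InvSemigroup.mul_inv_rev]
  · intro a b
    rw [xi_mapsE, (hmul (xiElt A s) (xiElt A t)).2 a b]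
    constructor
    · rintro ⟨hd, hb⟩
      rw [InvSemigroup.mul_inv_rev] at hd hb
      obtain ⟨h1, h2⟩ := (key_dom a.2).1 hd
      refine ⟨⟨t * a.1 * t⁻¹, conj_idem a.2 h1⟩, (xi_mapsE A).mpr ⟨h1, rfl⟩,
        (xi_mapsE A).mpr ⟨h2, ?_⟩⟩
      rw [hb]
      simp only [mul_assoc]
    · rintro ⟨m, htm, hsm⟩
      obtain ⟨h1, hm⟩ := (xi_mapsE A).mp htm
      obtain ⟨h2, hb⟩ := (xi_mapsE A).mp hsm
      rw [hm] at h2 hb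
      refine ⟨?_, ?_⟩
      · rw [InvSemigroup.mul_inv_rev]
        exact (key_dom a.2).2 ⟨h1, h2⟩
      · rw [InvSemigroup.mul_inv_rev, hb]
        simp only [mul_assoc]

end MunnRepAux
/-- generalised Munn representation: for a supported action `(X, S, p)` with
restricted presheaf `Y = (X, E(S), p)`, the maps `α_{s⁻¹}, θ_{s⁻¹}` form elements of `T_Y`
and `ξ : S → T_Y`, `ξ(s) = (α_{s⁻¹}, θ_{s⁻¹})`, is an idempotent-separating homomorphism
whose image is a wide inverse subsemigroup of `T_Y`. -/
theorem generalised_munn_representation {X S : Type*} [InvSemigroup S]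
    (A : SupportedAction X S)
    (mul : MunnElt A.toPresheaf → MunnElt A.toPresheaf → MunnElt A.toPresheaf)
    (hmul : IsMunnMul mul) :
    ∃ ξ : S → MunnElt A.toPresheaf,
      IsMunnRep A ξ ∧
      (∀ s t : S, ξ (s * t) = mul (ξ s) (ξ t)) ∧
      (∀ e f : S, e * e = e → f * f = f → ξ e = ξ f → e = f) ∧
      (∀ t : MunnElt A.toPresheaf, mul t t = t → ∃ s : S, ξ s = t) := by
  refine ⟨fun s => xiElt A s, ?_, fun s t => xi_hom A mul hmul s t, ?_, ?_⟩
  · -- the representation property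
    intro s
    exact ⟨rfl, rfl, fun _ => rfl, fun _ => rfl⟩
  · -- idempotent-separating
    intro e f he hf hxi
    have h1 : e⁻¹ * e = f⁻¹ * f := congrArg (fun u => u.e.1) hxi
    rw [InvSemigroup.idem_inv he, InvSemigroup.idem_inv hf, he, hf] at h1
    exact h1
  · -- the image is wide
    intro t ht
    have hgm : ∀ x y, t.maps x y ↔ ∃ z, t.maps x z ∧ t.maps z y := by
      intro x y
      have h := (hmul t t).1 x y
      rw [ht] at h
      exact h
    have hgmE : ∀ a b, t.mapsE a b ↔ ∃ m, t.mapsE a m ∧ t.mapsE m b := by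
      intro a b
      have h := (hmul t t).2 a b
      rw [ht] at h
      exact h
    have hθid : ∀ a : dOn (ES S) t.e, (t.θ a).1 = a.1 := by
      intro a
      obtain ⟨m, ⟨h1, hv1⟩, ⟨h2, hv2⟩⟩ := (hgmE a.1 (t.θ a).1).1 ⟨a.2, rfl⟩
      have hv1' : (t.θ a).1 = m := hv1
      subst hv1'
      have hinj := t.θ.injective (Subtype.ext hv2 : t.θ ⟨(t.θ a).1, h2⟩ = t.θ a)
      exact congrArg Subtype.val hinj
    have hαid : ∀ x : A.toPresheaf.sub t.e, (t.α x).1 = x.1 := by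
      intro x
      obtain ⟨z, ⟨h1, hv1⟩, ⟨h2, hv2⟩⟩ := (hgm x.1 (t.α x).1).1 ⟨x.2, rfl⟩
      have hv1' : (t.α x).1 = z := hv1
      subst hv1'
      have h2' : sle (A.toPresheaf.p (t.α x).1) t.e := h2
      have hinj := t.α.injective (Subtype.ext hv2 : t.α ⟨(t.α x).1, h2'⟩ = t.α x)
      exact congrArg Subtype.val hinj
    refine ⟨t.e.1, MunnElt.graph_ext ?_ ?_⟩
    · intro x y
      rw [xi_maps A]
      constructor
      · rintro ⟨hc, rfl⟩
        rw [InvSemigroup.idem_inv t.e.2, t.e.2] at hc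
        refine ⟨sle_es.mpr hc, ?_⟩
        rw [hαid ⟨x, sle_es.mpr hc⟩]
        rw [InvSemigroup.idem_inv t.e.2]
        exact (act_absorb A hc).symm
      · rintro ⟨h, rfl⟩
        have hc : A.p x = A.p x * t.e.1 := sle_es.mp h
        constructor
        · rw [InvSemigroup.idem_inv t.e.2, t.e.2]
          exact hc
        · rw [InvSemigroup.idem_inv t.e.2, hαid ⟨x, h⟩]
          exact (act_absorb A hc).symm
    · intro a b
      rw [xi_mapsE A]
      constructor
      · rintro ⟨hc, hb⟩
        rw [InvSemigroup.idem_inv t.e.2, t.e.2] at hc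
        rw [InvSemigroup.idem_inv t.e.2] at hb
        have hb' : b.1 = a.1 := by
          rw [hb]
          exact idem_sandwich a.2 t.e.2 hc
        refine ⟨sle_es.mpr hc, ?_⟩
        rw [hθid ⟨a, sle_es.mpr hc⟩]
        exact (Subtype.ext hb').symm
      · rintro ⟨h, rfl⟩
        have hc : a.1 = a.1 * t.e.1 := sle_es.mp h
        constructor
        · rw [InvSemigroup.idem_inv t.e.2, t.e.2]
          exact hc
        · rw [InvSemigroup.idem_inv t.e.2, hθid ⟨a, h⟩]
          exact (idem_sandwich a.2 t.e.2 hc).symm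
end
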